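/- On the round 2-sphere with metric g = (3/λ)(dθ² + sin²θ dφ²) (λ > 0) and X♭ = -2 dF/F with F = a sin φ sin θ + b cos θ (a,b constants, not both zero), the pair (g, X) satisfies the horizon Einstein equation Ric(g) = ½ X♭⊗X♭ - ½ L_X g + λ g away from the zero set of F. -/

import Mathlib

/-!
Since `X♭ = -2 d(log F)`, and `L_X g` is the symmetrised covariant derivative of `X♭`, the
`dF ⊗ dF / F²` terms of `½ X♭ ⊗ X♭` and `-½ L_X g` cancel, leaving `2 ∇dF / F`. The function `F`
is the restriction of a linear function on `ℝ³` to the sphere of radius `√(3/λ)`, so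
`∇dF = -(λ/3) F g`; and the round metric is Einstein, `Ric = (λ/3) g`. Hence the right-hand side
is `-(2λ/3) g + λ g = (λ/3) g = Ric`.
-/

noncomputable section

open scoped BigOperators

/-- Partial derivative of a function on `ℝⁿ` in the `i`-th coordinate direction. -/
def pd {n : ℕ} (i : Fin n) (f : (Fin n → ℝ) → ℝ) (x : Fin n → ℝ) : ℝ :=
  fderiv ℝ f x (Pi.single i 1)

/-- Christoffel symbols `Γ^k_{ij}` of a metric `g` with inverse `ginv`. -/
def christoffel {n : ℕ} (g ginv : (Fin n → ℝ) → Matrix (Fin n) (Fin n) ℝ)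
    (k i j : Fin n) (x : Fin n → ℝ) : ℝ :=
  (1/2) * ∑ l, ginv x k l *
    (pd i (fun y => g y j l) x + pd j (fun y => g y i l) x - pd l (fun y => g y i j) x)

/-- Ricci tensor `R_{ij}` in coordinates. -/
def ricci {n : ℕ} (g ginv : (Fin n → ℝ) → Matrix (Fin n) (Fin n) ℝ)
    (i j : Fin n) (x : Fin n → ℝ) : ℝ :=
  (∑ k, pd k (christoffel g ginv k i j) x)
  - (∑ k, pd j (christoffel g ginv k i k) x)
  + (∑ k, ∑ l, christoffel g ginv k k l x * christoffel g ginv l i j x)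
  - (∑ k, ∑ l, christoffel g ginv k j l x * christoffel g ginv l i k x)

/-- Covariant derivative `∇_a ω_b` of a one-form. -/
def covd {n : ℕ} (g ginv : (Fin n → ℝ) → Matrix (Fin n) (Fin n) ℝ)
    (ω : Fin n → (Fin n → ℝ) → ℝ) (a b : Fin n) (x : Fin n → ℝ) : ℝ :=
  pd a (ω b) x - ∑ c, christoffel g ginv c a b x * ω c x

/-- Raise the index of a one-form, producing vector-field components. -/
def raise {n : ℕ} (ginv : (Fin n → ℝ) → Matrix (Fin n) (Fin n) ℝ)
    (ω : Fin n → (Fin n → ℝ) → ℝ) (a : Fin n) (x : Fin n → ℝ) : ℝ :=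
  ∑ b, ginv x a b * ω b x

/-- Lie derivative `(L_V g)_{ij}` of the metric along a vector field `V`. -/
def lieMetric {n : ℕ} (g : (Fin n → ℝ) → Matrix (Fin n) (Fin n) ℝ)
    (V : Fin n → (Fin n → ℝ) → ℝ) (i j : Fin n) (x : Fin n → ℝ) : ℝ :=
  (∑ k, V k x * pd k (fun y => g y i j) x)
  + (∑ k, g x k j * pd i (V k) x) + (∑ k, g x i k * pd j (V k) x)

/-- The horizon Einstein equation `Ric = ½ X♭⊗X♭ − ½ L_X g + λ g` at a point,
for the one-form `ω = X♭` (with `X` its `g`-dual vector field). -/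
def HorizonEq {n : ℕ} (g ginv : (Fin n → ℝ) → Matrix (Fin n) (Fin n) ℝ)
    (ω : Fin n → (Fin n → ℝ) → ℝ) (lam : ℝ) (x : Fin n → ℝ) : Prop :=
  ∀ i j, ricci g ginv i j x =
    (1/2) * ω i x * ω j x - (1/2) * lieMetric g (raise ginv ω) i j x + lam * g x i j

section PartialDerivative

variable {n : ℕ} {i j : Fin n} {f g : (Fin n → ℝ) → ℝ} {x : Fin n → ℝ}

theorem pd_eq_of_hasFDerivAt {f' : (Fin n → ℝ) →L[ℝ] ℝ} (h : HasFDerivAt f f' x) :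
    pd i f x = f' (Pi.single i 1) := by
  rw [pd, h.fderiv]

theorem Filter.EventuallyEq.pd_eq (h : f =ᶠ[nhds x] g) : pd i f x = pd i g x := by
  rw [pd, pd, h.fderiv_eq]

@[simp] theorem pd_const (c : ℝ) : pd i (fun _ => c) x = 0 := by
  simp [pd]

@[simp] theorem pd_apply : pd i (fun y => y j) x = Pi.single (M := fun _ => ℝ) i 1 j :=
  pd_eq_of_hasFDerivAt (hasFDerivAt_apply j x)

theorem pd_add (hf : DifferentiableAt ℝ f x) (hg : DifferentiableAt ℝ g x) :
    pd i (fun y => f y + g y) x = pd i f x + pd i g x :=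
  pd_eq_of_hasFDerivAt (hf.hasFDerivAt.add hg.hasFDerivAt)

theorem pd_sub (hf : DifferentiableAt ℝ f x) (hg : DifferentiableAt ℝ g x) :
    pd i (fun y => f y - g y) x = pd i f x - pd i g x :=
  pd_eq_of_hasFDerivAt (hf.hasFDerivAt.sub hg.hasFDerivAt)

theorem pd_neg : pd i (fun y => -f y) x = -pd i f x := by
  simp [pd]

theorem pd_mul (hf : DifferentiableAt ℝ f x) (hg : DifferentiableAt ℝ g x) :
    pd i (fun y => f y * g y) x = f x * pd i g x + g x * pd i f x := by
  simp [pd, fderiv_fun_mul hf hg]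

theorem pd_comp {h : ℝ → ℝ} {h' : ℝ} (hh : HasDerivAt h h' (f x)) (hf : DifferentiableAt ℝ f x) :
    pd i (fun y => h (f y)) x = h' * pd i f x := by
  rw [pd_eq_of_hasFDerivAt (f := fun y => h (f y)) (hh.comp_hasFDerivAt x hf.hasFDerivAt)]
  simp [pd]

theorem pd_div (hf : DifferentiableAt ℝ f x) (hg : DifferentiableAt ℝ g x) (hgx : g x ≠ 0) :
    pd i (fun y => f y / g y) x = (g x * pd i f x - f x * pd i g x) / g x ^ 2 := by
  simp only [div_eq_mul_inv]
  rw [pd_mul (g := fun y => (g y)⁻¹) hf (hg.inv hgx), pd_comp (hasDerivAt_inv hgx) hg]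
  field_simp
  ring

theorem pd_sum {ι : Type*} (s : Finset ι) {F : ι → (Fin n → ℝ) → ℝ}
    (hF : ∀ k ∈ s, DifferentiableAt ℝ (F k) x) :
    pd i (fun y => ∑ k ∈ s, F k y) x = ∑ k ∈ s, pd i (F k) x := by
  rw [pd_eq_of_hasFDerivAt (HasFDerivAt.fun_sum fun k hk => (hF k hk).hasFDerivAt)]
  simp [pd]

theorem pd_sin (hf : DifferentiableAt ℝ f x) :
    pd i (fun y => Real.sin (f y)) x = Real.cos (f x) * pd i f x :=
  pd_comp (Real.hasDerivAt_sin _) hf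

theorem pd_cos (hf : DifferentiableAt ℝ f x) :
    pd i (fun y => Real.cos (f y)) x = -Real.sin (f x) * pd i f x :=
  pd_comp (Real.hasDerivAt_cos _) hf

theorem pd_pow (hf : DifferentiableAt ℝ f x) (m : ℕ) :
    pd i (fun y => f y ^ m) x = m * f x ^ (m - 1) * pd i f x :=
  pd_comp (hasDerivAt_pow m _) hf

theorem ContDiffAt.differentiableAt_pd (hf : ContDiffAt ℝ 2 f x) :
    DifferentiableAt ℝ (pd i f) x := by
  have h := (hf.fderiv_right (m := 1) (by norm_num)).differentiableAt one_ne_zero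
  exact h.clm_apply (differentiableAt_const _)

end PartialDerivative

section Coordinates

open Matrix

variable {n : ℕ} {g ginv : (Fin n → ℝ) → Matrix (Fin n) (Fin n) ℝ}
  {ω : Fin n → (Fin n → ℝ) → ℝ} {x : Fin n → ℝ}

theorem raise_eq_mulVec (y : Fin n → ℝ) (k : Fin n) :
    raise ginv ω k y = (ginv y *ᵥ fun b => ω b y) k :=
  rfl

theorem eventuallyEq_sum_mul_raise (hg_symm : ∀ y, (g y).IsSymm)
    (hinv : ∀ᶠ y in nhds x, g y * ginv y = 1) (j : Fin n) :
    ω j =ᶠ[nhds x] fun y => ∑ k, g y k j * raise ginv ω k y := by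
  filter_upwards [hinv] with y hy
  have h := congrFun (mulVec_mulVec (fun b => ω b y) (g y) (ginv y)) j
  rw [hy, one_mulVec] at h
  rw [← h]
  simp only [raise_eq_mulVec, mulVec, dotProduct, (hg_symm y).apply]

theorem sum_christoffel_mul (hg_symm : ∀ y, (g y).IsSymm)
    (hinv : ∀ᶠ y in nhds x, g y * ginv y = 1) (i j : Fin n) :
    ∑ c, christoffel g ginv c i j x * ω c x = (1 / 2) * ∑ l, raise ginv ω l x *
      (pd i (fun y => g y j l) x + pd j (fun y => g y i l) x - pd l (fun y => g y i j) x) := by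
  have hginv_symm : (ginv x).IsSymm := by
    rw [← inv_eq_right_inv hinv.self_of_nhds]
    exact (hg_symm x).inv
  simp only [christoffel, raise, Finset.mul_sum, Finset.sum_mul]
  rw [Finset.sum_comm]
  refine Finset.sum_congr rfl fun l _ => Finset.sum_congr rfl fun c _ => ?_
  rw [hginv_symm.apply]
  ring

theorem lieMetric_raise_eq_covd_add_covd (hg_symm : ∀ y, (g y).IsSymm)
    (hinv : ∀ᶠ y in nhds x, g y * ginv y = 1)
    (hg : ∀ k l, DifferentiableAt ℝ (fun y => g y k l) x)
    (hginv : ∀ k l, DifferentiableAt ℝ (fun y => ginv y k l) x)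
    (hω : ∀ k, DifferentiableAt ℝ (ω k) x) (i j : Fin n) :
    lieMetric g (raise ginv ω) i j x = covd g ginv ω i j x + covd g ginv ω j i x := by
  have hV : ∀ k, DifferentiableAt ℝ (raise ginv ω k) x := fun k => by
    unfold raise; fun_prop
  have hpd_ω : ∀ i j, pd i (ω j) x = ∑ k,
      (g x k j * pd i (raise ginv ω k) x + raise ginv ω k x * pd i (fun y => g y k j) x) :=
    fun i j => by
      rw [(eventuallyEq_sum_mul_raise (ω := ω) hg_symm hinv j).pd_eq,
        pd_sum (F := fun k y => g y k j * raise ginv ω k y) _ fun k _ => (hg k j).mul (hV k)]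
      exact Finset.sum_congr rfl fun k _ => pd_mul (hg k j) (hV k)
  have hpd_symm : ∀ k l m, pd k (fun y => g y l m) x = pd k (fun y => g y m l) x :=
    fun k l m => by simp only [(hg_symm _).apply]
  simp only [lieMetric, covd, hpd_ω, sum_christoffel_mul hg_symm hinv, Finset.mul_sum,
    ← Finset.sum_add_distrib, ← Finset.sum_sub_distrib]
  refine Finset.sum_congr rfl fun k _ => ?_
  rw [hpd_symm i k j, hpd_symm j k i, hpd_symm k j i, (hg_symm x).apply i k]
  ring

theorem covd_mul_pd_div {F : (Fin n → ℝ) → ℝ} (c : ℝ) (hF : ContDiffAt ℝ 2 F x) (hFx : F x ≠ 0)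
    (a b : Fin n) :
    covd g ginv (fun i y => c * pd i F y / F y) a b x =
      c * (covd g ginv (fun i => pd i F) a b x / F x - pd a F x * pd b F x / F x ^ 2) := by
  have hdF : ∀ i, DifferentiableAt ℝ (pd i F) x := fun i => hF.differentiableAt_pd
  have hF' : DifferentiableAt ℝ F x := hF.differentiableAt two_ne_zero
  rw [covd, covd, pd_div (f := fun y => c * pd b F y) (by fun_prop) hF' hFx,
    pd_mul (f := fun _ => c) (differentiableAt_const c) (hdF b)]
  have hsum : ∑ k, christoffel g ginv k a b x * (c * pd k F x / F x) =
      c / F x * ∑ k, christoffel g ginv k a b x * pd k F x := by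
    rw [Finset.mul_sum]
    exact Finset.sum_congr rfl fun k _ => by ring
  rw [hsum, pd_const]
  field_simp
  ring

theorem horizonEq_neg_two_mul_pd_div (hg_symm : ∀ y, (g y).IsSymm)
    (hinv : ∀ᶠ y in nhds x, g y * ginv y = 1)
    (hg : ∀ k l, DifferentiableAt ℝ (fun y => g y k l) x)
    (hginv : ∀ k l, DifferentiableAt ℝ (fun y => ginv y k l) x)
    {F : (Fin n → ℝ) → ℝ} (hF : ContDiffAt ℝ 2 F x) (hFx : F x ≠ 0) {lam : ℝ}
    (hricci : ∀ i j, ricci g ginv i j x = lam / 3 * g x i j)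
    (hhess : ∀ i j, covd g ginv (fun k => pd k F) i j x = -(lam / 3) * F x * g x i j) :
    HorizonEq g ginv (fun i y => -2 * pd i F y / F y) lam x := by
  have hω : ∀ k, DifferentiableAt ℝ (fun y => -2 * pd k F y / F y) x := fun k => by
    have := hF.differentiableAt_pd (i := k)
    have := hF.differentiableAt two_ne_zero
    fun_prop (disch := exact hFx)
  intro i j
  rw [lieMetric_raise_eq_covd_add_covd hg_symm hinv hg hginv hω, covd_mul_pd_div _ hF hFx,
    covd_mul_pd_div _ hF hFx, hricci, hhess, hhess, (hg_symm x).apply j i]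
  field_simp
  ring

end Coordinates

namespace RoundSphere

variable (lam a b : ℝ)

/-- The round metric $g = (3/λ)(dθ² + \sin²θ\,dφ²)$ in spherical coordinates $p = (θ, φ)$. -/
def sphMetric (p : Fin 2 → ℝ) : Matrix (Fin 2) (Fin 2) ℝ :=
  !![3 / lam, 0; 0, (3 / lam) * (Real.sin (p 0))^2]

/-- The inverse of the round metric. -/
def sphMetricInv (p : Fin 2 → ℝ) : Matrix (Fin 2) (Fin 2) ℝ :=
  !![lam / 3, 0; 0, (lam / 3) / (Real.sin (p 0))^2]

/-- $F = a \sin φ \sin θ + b \cos θ$. -/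
def Ffun (p : Fin 2 → ℝ) : ℝ := a * Real.sin (p 1) * Real.sin (p 0) + b * Real.cos (p 0)

/-- The one-form $X^♭ = -2\,dF/F$. -/
def sphXflat (i : Fin 2) (p : Fin 2 → ℝ) : ℝ := -2 * pd i (Ffun a b) p / Ffun a b p

theorem sphMetric_isSymm (y : Fin 2 → ℝ) : (sphMetric lam y).IsSymm :=
  Matrix.IsSymm.ext fun i j => by fin_cases i <;> fin_cases j <;> rfl

theorem sphMetric_mul_sphMetricInv (hlam : lam ≠ 0) {y : Fin 2 → ℝ} (hy : Real.sin (y 0) ≠ 0) :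
    sphMetric lam y * sphMetricInv lam y = 1 := by
  ext i j
  fin_cases i <;> fin_cases j <;>
    simp [sphMetric, sphMetricInv, Matrix.mul_apply, Fin.sum_univ_two, hlam]
  field_simp

theorem eventually_sin_ne_zero {p : Fin 2 → ℝ} (hp : Real.sin (p 0) ≠ 0) :
    ∀ᶠ y in nhds p, Real.sin (y 0) ≠ 0 :=
  (Real.continuous_sin.comp (continuous_apply 0)).continuousAt.eventually_ne hp

theorem differentiableAt_sphMetric (p : Fin 2 → ℝ) (k l : Fin 2) :
    DifferentiableAt ℝ (fun y => sphMetric lam y k l) p := by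
  fin_cases k <;> fin_cases l <;> simp [sphMetric]
  fun_prop

theorem differentiableAt_sphMetricInv {p : Fin 2 → ℝ} (hp : Real.sin (p 0) ≠ 0) (k l : Fin 2) :
    DifferentiableAt ℝ (fun y => sphMetricInv lam y k l) p := by
  fin_cases k <;> fin_cases l <;> simp [sphMetricInv]
  fun_prop (disch := exact pow_ne_zero 2 hp)

def sphChristoffel (k i j : Fin 2) : (Fin 2 → ℝ) → ℝ := fun y =>
  ![!![0, 0; 0, -(Real.sin (y 0) * Real.cos (y 0))],
    !![0, Real.cos (y 0) / Real.sin (y 0); Real.cos (y 0) / Real.sin (y 0), 0]] k i j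

theorem christoffel_sphMetric (hlam : lam ≠ 0) {y : Fin 2 → ℝ} (hy : Real.sin (y 0) ≠ 0)
    (k i j : Fin 2) :
    christoffel (sphMetric lam) (sphMetricInv lam) k i j y = sphChristoffel k i j y := by
  fin_cases k <;> fin_cases i <;> fin_cases j <;>
    simp (disch := fun_prop) [christoffel, Fin.sum_univ_two, sphMetric, sphMetricInv,
      sphChristoffel, pd_mul, pd_pow, pd_sin, Pi.single_apply] <;>
    field_simp

theorem christoffel_sphMetric_eventuallyEq (hlam : lam ≠ 0) {p : Fin 2 → ℝ}
    (hp : Real.sin (p 0) ≠ 0) (k i j : Fin 2) :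
    christoffel (sphMetric lam) (sphMetricInv lam) k i j =ᶠ[nhds p] sphChristoffel k i j := by
  filter_upwards [eventually_sin_ne_zero hp] with y hy
  exact christoffel_sphMetric lam hlam hy k i j

theorem ricci_sphMetric (hlam : lam ≠ 0) {p : Fin 2 → ℝ} (hp : Real.sin (p 0) ≠ 0)
    (i j : Fin 2) :
    ricci (sphMetric lam) (sphMetricInv lam) i j p = lam / 3 * sphMetric lam p i j := by
  have hΓ := christoffel_sphMetric_eventuallyEq lam hlam hp
  simp only [ricci, Fin.sum_univ_two, fun d k i j => (hΓ k i j).pd_eq (i := d),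
    fun k i j => (hΓ k i j).self_of_nhds]
  unfold sphChristoffel
  fin_cases i <;> fin_cases j <;>
    simp (disch := first | fun_prop | assumption) [sphMetric, pd_neg,
      pd_mul, pd_div, pd_sin, pd_cos, Pi.single_apply] <;>
    field_simp <;> ring

theorem pd_Ffun (k : Fin 2) :
    pd k (Ffun a b) = fun y =>
      ![a * Real.sin (y 1) * Real.cos (y 0) - b * Real.sin (y 0),
        a * Real.cos (y 1) * Real.sin (y 0)] k := by
  funext y
  unfold Ffun
  fin_cases k <;> simp (disch := fun_prop) [pd_add, pd_mul, pd_sin, pd_cos, Pi.single_apply] <;>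
    ring

theorem covd_pd_Ffun (hlam : lam ≠ 0) {p : Fin 2 → ℝ} (hp : Real.sin (p 0) ≠ 0) (i j : Fin 2) :
    covd (sphMetric lam) (sphMetricInv lam) (fun k => pd k (Ffun a b)) i j p =
      -(lam / 3) * Ffun a b p * sphMetric lam p i j := by
  simp only [covd, pd_Ffun, Fin.sum_univ_two, christoffel_sphMetric lam hlam hp, sphChristoffel]
  fin_cases i <;> fin_cases j <;>
    simp (disch := fun_prop) [Ffun, sphMetric, pd_sub, pd_mul, pd_sin, pd_cos, Pi.single_apply] <;>
    field_simp
  · ring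
  · ring
  · ring
  · linear_combination a * Real.sin (p 1) * Real.sin_sq_add_cos_sq (p 0)

theorem contDiff_Ffun : ContDiff ℝ 2 (Ffun a b) := by
  unfold Ffun
  fun_prop

theorem sphere_horizon_einstein (hlam : 0 < lam)
    (p : Fin 2 → ℝ) (hsin : Real.sin (p 0) ≠ 0) (hF : Ffun a b p ≠ 0) :
    HorizonEq (sphMetric lam) (sphMetricInv lam) (sphXflat a b) lam p :=
  horizonEq_neg_two_mul_pd_div (sphMetric_isSymm lam)
    ((eventually_sin_ne_zero hsin).mono fun _ hy => sphMetric_mul_sphMetricInv lam hlam.ne' hy)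
    (differentiableAt_sphMetric lam p) (differentiableAt_sphMetricInv lam hsin)
    (contDiff_Ffun a b).contDiffAt hF (ricci_sphMetric lam hlam.ne' hsin)
    (covd_pd_Ffun lam a b hlam.ne' hsin)

end RoundSphere
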